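/- Let X ⊆ ℝ^n, let g be a continuous metric on X, and let Ψ : V → ℝ be C¹ on an open neighborhood V of X such that S_ℓ := {x : Ψ(x) ≤ ℓ} ∩ X is compact for every ℓ ∈ ℝ. Assume that every Krasovskii solution of the projected gradient system ẋ ∈ Π^g_X(−grad_g Ψ)(x) from every initial condition in X extends to a complete Krasovskii solution on [0,∞). Then every complete Krasovskii solution x : [0,∞) → X of the projected gradient system satisfies dist(x(t), E) → 0 as t → ∞, where E := {x̂ ∈ X : 0 ∈ K[Π^g_X(−grad_g Ψ)](x̂)} is the set of weak equilibrium points. -/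

import Mathlib

open MeasureTheory Filter Topology Set
open scoped RealInnerProductSpace

/-- Euclidean space ℝ^n. -/
abbrev Euc (n : ℕ) := EuclideanSpace ℝ (Fin n)

variable {n : ℕ}

/-- The tangent (contingent) cone of `X` at `x`. -/
def tanCone (X : Set (Euc n)) (x : Euc n) : Set (Euc n) :=
  {v | ∃ (xk : ℕ → Euc n) (δ : ℕ → ℝ),
    (∀ k, xk k ∈ X) ∧ Tendsto xk atTop (𝓝 x) ∧
    (∀ k, 0 < δ k) ∧ Tendsto δ atTop (𝓝 0) ∧
    Tendsto (fun k => (δ k)⁻¹ • (xk k - x)) atTop (𝓝 v)}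

/-- The Clarke tangent cone of `X` at `x` (inner limit of tangent cones). -/
def clarkeCone (X : Set (Euc n)) (x : Euc n) : Set (Euc n) :=
  {v | ∀ yk : ℕ → Euc n, (∀ k, yk k ∈ X) → Tendsto yk atTop (𝓝 x) →
    ∃ vk : ℕ → Euc n, (∀ k, vk k ∈ tanCone X (yk k)) ∧ Tendsto vk atTop (𝓝 v)}

/-- A set is locally compact if it is the intersection of a closed and an open set. -/
def LocCompactSet (X : Set (Euc n)) : Prop :=
  ∃ C U : Set (Euc n), IsClosed C ∧ IsOpen U ∧ X = C ∩ U

/-- `X` is Clarke regular: locally compact and tangent cone equals Clarke tangent cone. -/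
def ClarkeRegular (X : Set (Euc n)) : Prop :=
  LocCompactSet X ∧ ∀ x ∈ X, tanCone X x = clarkeCone X x

/-- A (Riemannian) metric: an inner product `B x` on ℝ^n for every point `x`. -/
structure VarMetric (n : ℕ) where
  B : Euc n → Euc n →L[ℝ] Euc n →L[ℝ] ℝ
  symm : ∀ x v w, B x v w = B x w v
  posdef : ∀ x v, v ≠ 0 → 0 < B x v v

namespace VarMetric

/-- The norm induced by the metric at `x`. -/
noncomputable def gnorm (g : VarMetric n) (x v : Euc n) : ℝ := Real.sqrt (g.B x v v)

/-- Maximum eigenvalue (max of the `g`-norm over the Euclidean unit sphere). -/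
noncomputable def maxEig (g : VarMetric n) (x : Euc n) : ℝ :=
  sSup {r | ∃ v : Euc n, ‖v‖ = 1 ∧ r = g.gnorm x v}

/-- Minimum eigenvalue (min of the `g`-norm over the Euclidean unit sphere). -/
noncomputable def minEig (g : VarMetric n) (x : Euc n) : ℝ :=
  sInf {r | ∃ v : Euc n, ‖v‖ = 1 ∧ r = g.gnorm x v}

/-- Condition number of the metric at `x`. -/
noncomputable def cond (g : VarMetric n) (x : Euc n) : ℝ := g.maxEig x / g.minEig x

end VarMetric

/-- The projected vector field: `g`-closest points to `f x` in the tangent cone. -/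
noncomputable def projVF (X : Set (Euc n)) (g : VarMetric n) (f : Euc n → Euc n)
    (x : Euc n) : Set (Euc n) :=
  {v | v ∈ tanCone X x ∧ ∀ w ∈ tanCone X x, g.gnorm x (v - f x) ≤ g.gnorm x (w - f x)}

/-- Krasovskii regularization of a set-valued map `F` on `X`. -/
def kras (X : Set (Euc n)) (F : Euc n → Set (Euc n)) (x : Euc n) : Set (Euc n) :=
  closure (convexHull ℝ {v | ∃ (xk : ℕ → Euc n) (vk : ℕ → Euc n),
    (∀ k, xk k ∈ X) ∧ Tendsto xk atTop (𝓝 x) ∧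
    (∀ k, vk k ∈ F (xk k)) ∧ Tendsto vk atTop (𝓝 v)})

/-- Carathéodory solution of `ẋ ∈ F(x)`, `x 0 = x₀`, on the interval `I`
(`I = Set.Ico 0 T`, or `Set.Ici 0` for complete solutions). -/
def IsSolOn (X : Set (Euc n)) (F : Euc n → Set (Euc n)) (x₀ : Euc n)
    (x : ℝ → Euc n) (I : Set ℝ) : Prop :=
  x 0 = x₀ ∧ (∀ t ∈ I, x t ∈ X) ∧
  ∃ v : ℝ → Euc n, LocallyIntegrableOn v I volume ∧
    (∀ t ∈ I, x t = x₀ + ∫ s in (0:ℝ)..t, v s) ∧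
    (∀ᵐ t ∂(volume.restrict I), v t ∈ F (x t))

/-- The normal cone of `X` at `x` with respect to the metric `g` (polar of the Clarke cone). -/
def normalCone (X : Set (Euc n)) (g : VarMetric n) (x : Euc n) : Set (Euc n) :=
  {η | ∀ v ∈ clarkeCone X x, g.B x v η ≤ 0}

section Helpers

variable {n : ℕ}

/-- The limit set underlying the Krasovskii regularization. -/
def Lset (X : Set (Euc n)) (F : Euc n → Set (Euc n)) (x : Euc n) : Set (Euc n) :=
  {v | ∃ (xk : ℕ → Euc n) (vk : ℕ → Euc n),
    (∀ k, xk k ∈ X) ∧ Tendsto xk atTop (𝓝 x) ∧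
    (∀ k, vk k ∈ F (xk k)) ∧ Tendsto vk atTop (𝓝 v)}

lemma kras_eq (X : Set (Euc n)) (F : Euc n → Set (Euc n)) (x : Euc n) :
    kras X F x = closure (convexHull ℝ (Lset X F x)) := rfl

lemma Lset_subset_kras (X : Set (Euc n)) (F : Euc n → Set (Euc n)) (x : Euc n) :
    Lset X F x ⊆ kras X F x :=
  (subset_convexHull ℝ _).trans subset_closure

lemma zero_mem_tanCone {X : Set (Euc n)} {x : Euc n} (hx : x ∈ X) :
    (0 : Euc n) ∈ tanCone X x := by
  refine ⟨fun _ => x, fun k => (k+1:ℝ)⁻¹, fun _ => hx, tendsto_const_nhds, ?_, ?_, ?_⟩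
  · intro k; positivity
  · exact tendsto_one_div_add_atTop_nhds_zero_nat.congr (by simp [one_div])
  · simpa using (tendsto_const_nhds : Tendsto (fun _ : ℕ => (0 : Euc n)) atTop (𝓝 0))

lemma VarMetric.B_nonneg (g : VarMetric n) (x v : Euc n) : 0 ≤ g.B x v v := by
  rcases eq_or_ne v 0 with rfl | hv
  · simp
  · exact (g.posdef x v hv).le

/-- Key inequality for the projected vector field: `B v v ≤ 2 B v (f x)`. -/
lemma projVF_key {X : Set (Euc n)} {g : VarMetric n} {f : Euc n → Euc n} {x v : Euc n}
    (hx : x ∈ X) (hv : v ∈ projVF X g f x) :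
    g.B x v v ≤ 2 * g.B x v (f x) := by
  obtain ⟨-, hmin⟩ := hv
  have h0 := hmin 0 (zero_mem_tanCone hx)
  have h1 : g.B x (v - f x) (v - f x) ≤ g.B x (0 - f x) (0 - f x) := by
    have hA := g.B_nonneg x (v - f x)
    have hB := g.B_nonneg x (0 - f x)
    unfold VarMetric.gnorm at h0
    nlinarith [Real.sq_sqrt hA, Real.sq_sqrt hB,
      Real.sqrt_nonneg (g.B x (v - f x) (v - f x)),
      Real.sqrt_nonneg (g.B x (0 - f x) (0 - f x))]
  have hexp : g.B x (v - f x) (v - f x)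
      = g.B x v v - 2 * g.B x v (f x) + g.B x (f x) (f x) := by
    simp only [map_sub, ContinuousLinearMap.sub_apply]
    have := g.symm x v (f x)
    ring_nf
    linarith [g.symm x (f x) v]
  have hexp0 : g.B x (0 - f x) (0 - f x) = g.B x (f x) (f x) := by
    simp
  rw [hexp, hexp0] at h1
  linarith

end Helpers
section Helpers2

variable {n : ℕ}

lemma tendsto_clm_apply {α : Type*} {E F : Type*} [NormedAddCommGroup E] [NormedSpace ℝ E]
    [NormedAddCommGroup F] [NormedSpace ℝ F] {l : Filter α}
    {Φ : α → E →L[ℝ] F} {Φ₀ : E →L[ℝ] F} {w : α → E} {w₀ : E}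
    (hΦ : Tendsto Φ l (𝓝 Φ₀)) (hw : Tendsto w l (𝓝 w₀)) :
    Tendsto (fun k => Φ k (w k)) l (𝓝 (Φ₀ w₀)) :=
  (isBoundedBilinearMap_apply.continuous.tendsto (Φ₀, w₀)).comp (hΦ.prodMk_nhds hw)

/-- Main pointwise inequality on the Krasovskii regularization. -/
lemma kras_fderiv_le {X : Set (Euc n)} {g : VarMetric n} {V : Set (Euc n)}
    (hV : IsOpen V) (hXV : X ⊆ V) {Ψ : Euc n → ℝ} (hΨ : ContDiffOn ℝ 1 Ψ V)
    (hg : ContinuousOn g.B X) {gradΨ : Euc n → Euc n}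
    (hgrad : ∀ x ∈ X, ∀ w : Euc n, g.B x (gradΨ x) w = fderiv ℝ Ψ x w)
    {z u : Euc n} (hz : z ∈ X)
    (hu : u ∈ kras X (projVF X g (fun y => -gradΨ y)) z) :
    fderiv ℝ Ψ z u + g.B z u u / 2 ≤ 0 := by
  have hDcont : ContinuousOn (fderiv ℝ Ψ) V := hΨ.continuousOn_fderiv_of_isOpen hV le_rfl
  set φ : Euc n → ℝ := fun w => fderiv ℝ Ψ z w + g.B z w w / 2 with hφ
  have hφcont : Continuous φ := by
    have h1 : Continuous fun w : Euc n => g.B z w w :=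
      ((g.B z).continuous.clm_apply continuous_id)
    exact ((fderiv ℝ Ψ z).continuous.add (h1.div_const 2))
  have hPclosed : IsClosed {w : Euc n | φ w ≤ 0} :=
    isClosed_le hφcont continuous_const
  have hdiffq : ∀ u1 u2 : Euc n, 0 ≤ g.B z u1 u1 - 2 * g.B z u1 u2 + g.B z u2 u2 := by
    intro u1 u2
    have h := g.B_nonneg z (u1 - u2)
    simp only [map_sub, ContinuousLinearMap.sub_apply] at h
    have hsym := g.symm z u1 u2
    linarith
  have hPconvex : Convex ℝ {w : Euc n | φ w ≤ 0} := by
    intro u1 h1 u2 h2 a b ha hb hab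
    simp only [mem_setOf_eq, hφ, map_add, _root_.map_smul, ContinuousLinearMap.add_apply,
      ContinuousLinearMap.smul_apply, smul_eq_mul] at h1 h2 ⊢
    have hsym := g.symm z u1 u2
    have e1 := mul_le_mul_of_nonneg_left h1 ha
    have e2 := mul_le_mul_of_nonneg_left h2 hb
    have e3 := mul_nonneg (mul_nonneg ha hb) (hdiffq u1 u2)
    have hb' : b = 1 - a := by linarith
    subst hb'
    rw [← hsym]
    nlinarith [e1, e2, e3]
  have hLP : Lset X (projVF X g (fun y => -gradΨ y)) z ⊆ {w : Euc n | φ w ≤ 0} := by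
    rintro w ⟨yk, vk, hykX, hyk, hvkF, hvk⟩
    have hk : ∀ k, fderiv ℝ Ψ (yk k) (vk k) + g.B (yk k) (vk k) (vk k) / 2 ≤ 0 := by
      intro k
      have h := projVF_key (hykX k) (hvkF k)
      have h2 : g.B (yk k) (vk k) (-gradΨ (yk k)) = -(fderiv ℝ Ψ (yk k) (vk k)) := by
        have := hgrad (yk k) (hykX k) (vk k)
        have hsym := g.symm (yk k) (vk k) (gradΨ (yk k))
        simp only [map_neg]
        linarith
      rw [h2] at h
      linarith
    have hykV : Tendsto yk atTop (𝓝[X] z) :=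
      tendsto_nhdsWithin_iff.mpr ⟨hyk, Eventually.of_forall hykX⟩
    have hD : Tendsto (fun k => fderiv ℝ Ψ (yk k)) atTop (𝓝 (fderiv ℝ Ψ z)) := by
      refine Filter.Tendsto.comp (hDcont z (hXV hz)) ?_
      exact tendsto_nhdsWithin_iff.mpr ⟨hyk, Eventually.of_forall (fun k => hXV (hykX k))⟩
    have hB : Tendsto (fun k => g.B (yk k)) atTop (𝓝 (g.B z)) :=
      Filter.Tendsto.comp (hg z hz) hykV
    have hlim : Tendsto (fun k => fderiv ℝ Ψ (yk k) (vk k)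
        + g.B (yk k) (vk k) (vk k) / 2) atTop (𝓝 (φ w)) := by
      exact (tendsto_clm_apply hD hvk).add
        ((tendsto_clm_apply (tendsto_clm_apply hB hvk) hvk).div_const 2)
    exact le_of_tendsto hlim (Eventually.of_forall hk)
  have : kras X (projVF X g (fun y => -gradΨ y)) z ⊆ {w : Euc n | φ w ≤ 0} := by
    rw [kras_eq]
    exact closure_minimal (convexHull_min hLP hPconvex) hPclosed
  exact this hu

end Helpers2
section Helpers3

variable {n : ℕ}

lemma posdef_lower {g : VarMetric n} {X K : Set (Euc n)} (hg : ContinuousOn g.B X)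
    (hK : IsCompact K) (hKX : K ⊆ X) :
    ∃ m > (0:ℝ), ∀ z ∈ K, ∀ u : Euc n, m * ‖u‖^2 ≤ g.B z u u := by
  by_cases hKne : K.Nonempty; swap
  · exact ⟨1, one_pos, fun z hz => absurd ⟨z, hz⟩ hKne⟩
  by_cases hsp : (Metric.sphere (0:Euc n) 1).Nonempty; swap
  · refine ⟨1, one_pos, fun z hz u => ?_⟩
    have hu : u = 0 := by
      by_contra h
      exact hsp ⟨‖u‖⁻¹ • u, by
        rw [mem_sphere_zero_iff_norm, norm_smul, norm_inv, norm_norm,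
          inv_mul_cancel₀ (norm_ne_zero_iff.mpr h)]⟩
    subst hu; simp
  have hgK : ContinuousOn (fun p : Euc n × Euc n => g.B p.1 p.2 p.2)
      (K ×ˢ Metric.sphere (0:Euc n) 1) := by
    have h1 : ContinuousOn (fun p : Euc n × Euc n => g.B p.1)
        (K ×ˢ Metric.sphere (0:Euc n) 1) :=
      hg.comp continuousOn_fst (fun p hp => hKX hp.1)
    exact (h1.clm_apply continuousOn_snd).clm_apply continuousOn_snd
  obtain ⟨⟨z₀, u₀⟩, ⟨hz₀, hu₀⟩, hmin'⟩ :=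
    (hK.prod (isCompact_sphere (0:Euc n) 1)).exists_isMinOn (hKne.prod hsp) hgK
  have hmin := isMinOn_iff.mp hmin'
  have hu₀1 : ‖u₀‖ = 1 := mem_sphere_zero_iff_norm.mp hu₀
  have hu₀0 : u₀ ≠ 0 := by intro h; rw [h] at hu₀1; simp at hu₀1
  refine ⟨g.B z₀ u₀ u₀, g.posdef z₀ u₀ hu₀0, fun z hz u => ?_⟩
  rcases eq_or_ne u 0 with rfl | hu
  · simp
  have hn : (0:ℝ) < ‖u‖ := norm_pos_iff.mpr hu
  have hw : ‖u‖⁻¹ • u ∈ Metric.sphere (0:Euc n) 1 := by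
    rw [mem_sphere_zero_iff_norm, norm_smul, norm_inv, norm_norm,
      inv_mul_cancel₀ hn.ne']
  have h := hmin (z, ‖u‖⁻¹ • u) ⟨hz, hw⟩
  have hcalc : g.B z (‖u‖⁻¹ • u) (‖u‖⁻¹ • u) = ‖u‖⁻¹ * (‖u‖⁻¹ * g.B z u u) := by
    simp [_root_.map_smul, ContinuousLinearMap.smul_apply, smul_eq_mul]
  rw [hcalc] at h
  have h2 : ‖u‖^2 * g.B z₀ u₀ u₀ ≤ ‖u‖^2 * (‖u‖⁻¹ * (‖u‖⁻¹ * g.B z u u)) :=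
    mul_le_mul_of_nonneg_left h (sq_nonneg _)
  have h3 : ‖u‖^2 * (‖u‖⁻¹ * (‖u‖⁻¹ * g.B z u u)) = g.B z u u := by
    field_simp
  rw [h3] at h2
  linarith

lemma kras_bound {X : Set (Euc n)} {g : VarMetric n} {V : Set (Euc n)}
    (hV : IsOpen V) (hXV : X ⊆ V) {Ψ : Euc n → ℝ} (hΨ : ContDiffOn ℝ 1 Ψ V)
    (hg : ContinuousOn g.B X) {gradΨ : Euc n → Euc n}
    (hgrad : ∀ x ∈ X, ∀ w : Euc n, g.B x (gradΨ x) w = fderiv ℝ Ψ x w)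
    {K : Set (Euc n)} (hK : IsCompact K) (hKX : K ⊆ X) :
    ∃ M > (0:ℝ), ∀ z ∈ K, ∀ u ∈ kras X (projVF X g (fun y => -gradΨ y)) z, ‖u‖ ≤ M := by
  obtain ⟨m, hm, hml⟩ := posdef_lower hg hK hKX
  have hDcont : ContinuousOn (fderiv ℝ Ψ) V := hΨ.continuousOn_fderiv_of_isOpen hV le_rfl
  obtain ⟨C, hC⟩ := hK.exists_bound_of_continuousOn (hDcont.mono (hKX.trans hXV))
  refine ⟨max (2*C/m) 1, lt_of_lt_of_le one_pos (le_max_right _ _), fun z hz u hu => ?_⟩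
  have hkey := kras_fderiv_le hV hXV hΨ hg hgrad (hKX hz) hu
  rcases eq_or_ne u 0 with rfl | hu0
  · simp
  have hn : (0:ℝ) < ‖u‖ := norm_pos_iff.mpr hu0
  have hb1 : g.B z u u ≤ 2 * C * ‖u‖ := by
    have hop : |fderiv ℝ Ψ z u| ≤ ‖fderiv ℝ Ψ z‖ * ‖u‖ := by
      simpa [Real.norm_eq_abs] using (fderiv ℝ Ψ z).le_opNorm u
    have := hC z hz
    nlinarith [abs_nonneg (fderiv ℝ Ψ z u), neg_abs_le (fderiv ℝ Ψ z u)]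
  have hb2 := hml z hz u
  have : ‖u‖ ≤ 2 * C / m := by
    rw [le_div_iff₀ hm]
    nlinarith
  exact le_trans this (le_max_left _ _)

end Helpers3
section Helpers4

variable {n : ℕ}

lemma lset_osc {X : Set (Euc n)} {F : Euc n → Set (Euc n)} {w p : ℕ → Euc n} {zb pb : Euc n}
    (hwX : ∀ j, w j ∈ X) (hw : Tendsto w atTop (𝓝 zb))
    (hp : ∀ j, p j ∈ Lset X F (w j)) (hpl : Tendsto p atTop (𝓝 pb)) :
    pb ∈ Lset X F zb := by
  have hchoice : ∀ j : ℕ, ∃ y q : Euc n, y ∈ X ∧ q ∈ F y ∧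
      dist y (w j) < 1/((j:ℝ)+1) ∧ dist q (p j) < 1/((j:ℝ)+1) := by
    intro j
    obtain ⟨xk, vk, hxkX, hxk, hvkF, hvk⟩ := hp j
    obtain ⟨N1, h1⟩ := Metric.tendsto_atTop.mp hxk (1/((j:ℝ)+1)) (by positivity)
    obtain ⟨N2, h2⟩ := Metric.tendsto_atTop.mp hvk (1/((j:ℝ)+1)) (by positivity)
    exact ⟨xk (max N1 N2), vk (max N1 N2), hxkX _, hvkF _,
      h1 _ (le_max_left _ _), h2 _ (le_max_right _ _)⟩
  choose y q hyX hqF hyd hqd using hchoice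
  have hzero : Tendsto (fun j : ℕ => 1/((j:ℝ)+1)) atTop (𝓝 0) := by
    exact tendsto_one_div_add_atTop_nhds_zero_nat
  have hy : Tendsto y atTop (𝓝 zb) := by
    rw [tendsto_iff_dist_tendsto_zero]
    refine squeeze_zero (g := fun j : ℕ => 1/((j:ℝ)+1) + dist (w j) zb)
      (fun j => dist_nonneg) (fun j => ?_) ?_
    · exact (dist_triangle (y j) (w j) zb).trans
        (add_le_add_left (hyd j).le _)
    · simpa using hzero.add (tendsto_iff_dist_tendsto_zero.mp hw)
  have hq : Tendsto q atTop (𝓝 pb) := by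
    rw [tendsto_iff_dist_tendsto_zero]
    refine squeeze_zero (g := fun j : ℕ => 1/((j:ℝ)+1) + dist (p j) pb)
      (fun j => dist_nonneg) (fun j => ?_) ?_
    · exact (dist_triangle (q j) (p j) pb).trans
        (add_le_add_left (hqd j).le _)
    · simpa using hzero.add (tendsto_iff_dist_tendsto_zero.mp hpl)
  exact ⟨y, q, hyX, hy, hqF, hq⟩

lemma kras_norm_lower {X : Set (Euc n)} {g : VarMetric n} {V : Set (Euc n)}
    (hV : IsOpen V) (hXV : X ⊆ V) {Ψ : Euc n → ℝ} (hΨ : ContDiffOn ℝ 1 Ψ V)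
    (hg : ContinuousOn g.B X) {gradΨ : Euc n → Euc n}
    (hgrad : ∀ x ∈ X, ∀ w : Euc n, g.B x (gradΨ x) w = fderiv ℝ Ψ x w)
    {K : Set (Euc n)} (hK : IsCompact K) (hKX : K ⊆ X)
    (hK0 : ∀ z ∈ K, (0:Euc n) ∉ kras X (projVF X g (fun y => -gradΨ y)) z) :
    ∃ d > (0:ℝ), ∀ z ∈ K, ∀ u ∈ kras X (projVF X g (fun y => -gradΨ y)) z, d ≤ ‖u‖ := by
  set F := projVF X g (fun y => -gradΨ y) with hF
  by_contra hcon
  push_neg at hcon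
  have hch : ∀ j : ℕ, ∃ z, z ∈ K ∧ ∃ u, u ∈ kras X F z ∧ ‖u‖ < 1/((j:ℝ)+1) := by
    intro j
    obtain ⟨z, hz, u, hu, hun⟩ := hcon (1/((j:ℝ)+1)) (by positivity)
    exact ⟨z, hz, u, hu, hun⟩
  choose z hzK u huK hun using hch
  obtain ⟨zb, hzbK, φ, hφ, hφt⟩ := hK.tendsto_subseq hzK
  have hconv : Convex ℝ (kras X F zb) := (convex_convexHull ℝ _).closure
  have hclosed : IsClosed (kras X F zb) := isClosed_closure
  obtain ⟨M, hM, hMb⟩ := kras_bound hV hXV hΨ hg hgrad hK hKX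
  obtain ⟨ψ, u₀, hsep, hu₀⟩ :=
    geometric_hahn_banach_closed_point hconv hclosed (hK0 zb hzbK)
  have hu₀neg : u₀ < 0 := by simpa using hu₀
  have claim : ∀ᶠ j in atTop, ∀ pp ∈ Lset X F (z (φ j)), ψ pp ≤ u₀/2 := by
    by_contra hcl
    rw [Filter.not_eventually] at hcl
    have hcl' : ∃ᶠ j in atTop, ∃ pp ∈ Lset X F (z (φ j)), u₀/2 < ψ pp := by
      refine hcl.mono fun j hj => ?_
      push_neg at hj
      exact hj
    obtain ⟨σ, hσ, hσp⟩ := Filter.extraction_of_frequently_atTop hcl'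
    choose pp hppL hppψ using hσp
    have hppB : ∀ j, pp j ∈ Metric.closedBall (0:Euc n) M := by
      intro j
      rw [Metric.mem_closedBall, dist_zero_right]
      exact hMb _ (hzK _) _ (Lset_subset_kras X F _ (hppL j))
    obtain ⟨pbar, -, ρ, hρ, hρt⟩ :=
      (isCompact_closedBall (0:Euc n) M).tendsto_subseq hppB
    have hw : Tendsto (fun j => z (φ (σ (ρ j)))) atTop (𝓝 zb) :=
      hφt.comp ((hσ.comp hρ).tendsto_atTop)
    have hpbar : pbar ∈ Lset X F zb :=
      lset_osc (fun j => hKX (hzK _)) hw (fun j => hppL (ρ j)) hρt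
    have h1 : ψ pbar < u₀ := hsep pbar (Lset_subset_kras X F _ hpbar)
    have h2 : u₀/2 ≤ ψ pbar := by
      refine ge_of_tendsto ((ψ.continuous.tendsto pbar).comp hρt) ?_
      exact Eventually.of_forall fun j => (hppψ (ρ j)).le
    linarith
  have hhalf_conv : Convex ℝ {w : Euc n | ψ w ≤ u₀/2} :=
    convex_halfSpace_le (ψ.toLinearMap.isLinear) _
  have hhalf_closed : IsClosed {w : Euc n | ψ w ≤ u₀/2} :=
    isClosed_le ψ.continuous continuous_const
  have hhalf : ∀ᶠ j in atTop, ψ (u (φ j)) ≤ u₀/2 := by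
    refine claim.mono fun j hj => ?_
    have : kras X F (z (φ j)) ⊆ {w : Euc n | ψ w ≤ u₀/2} := by
      rw [kras_eq]
      exact closure_minimal (convexHull_min hj hhalf_conv) hhalf_closed
    exact this (huK (φ j))
  have htend0 : Tendsto (fun j => ψ (u (φ j))) atTop (𝓝 0) := by
    refine squeeze_zero_norm (a := fun j : ℕ => ‖ψ‖ * (1/((j:ℝ)+1))) (fun j => ?_) ?_
    · calc ‖ψ (u (φ j))‖ ≤ ‖ψ‖ * ‖u (φ j)‖ := ψ.le_opNorm _
        _ ≤ ‖ψ‖ * (1/((j:ℝ)+1)) := by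
            refine mul_le_mul_of_nonneg_left ?_ (norm_nonneg ψ)
            refine (hun (φ j)).le.trans ?_
            have h1 : ((j:ℝ)+1) ≤ ((φ j : ℝ)+1) := by
              have : j ≤ φ j := hφ.le_apply
              have : (j:ℝ) ≤ (φ j : ℝ) := by exact_mod_cast this
              linarith
            exact one_div_le_one_div_of_le (by positivity) h1
    · simpa using tendsto_const_nhds.mul
        (tendsto_one_div_add_atTop_nhds_zero_nat (𝕜 := ℝ))
  have hev : ∀ᶠ j in atTop, u₀/2 < ψ (u (φ j)) :=
    htend0.eventually (eventually_gt_nhds (by linarith))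
  obtain ⟨j, h1, h2⟩ := (hhalf.and hev).exists
  linarith

end Helpers4
section KeyIneq

variable {n : ℕ}

/-- Fundamental inequality: along a solution, `Ψ∘x` decreases at least as fast as the
integral of `t ↦ DΨ(x t)(v t)`. -/
lemma key_ineq {X : Set (Euc n)} {g : VarMetric n} {V : Set (Euc n)}
    (hV : IsOpen V) (hXV : X ⊆ V) {Ψ : Euc n → ℝ} (hΨ : ContDiffOn ℝ 1 Ψ V)
    (hg : ContinuousOn g.B X) {gradΨ : Euc n → Euc n}
    (hgrad : ∀ x ∈ X, ∀ w : Euc n, g.B x (gradΨ x) w = fderiv ℝ Ψ x w)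
    {x v : ℝ → Euc n} {a b : ℝ} (hab : a ≤ b)
    (hx_cont : ContinuousOn x (Icc a b))
    (hxX : ∀ t ∈ Icc a b, x t ∈ X)
    (hint : ∀ s ∈ Icc a b, ∀ t ∈ Icc a b, x t = x s + ∫ r in s..t, v r)
    (hv_int : IntegrableOn v (Icc a b) volume)
    (hvK : ∀ᵐ t ∂(volume.restrict (Icc a b)),
      v t ∈ kras X (projVF X g (fun y => -gradΨ y)) (x t)) :
    Ψ (x b) - Ψ (x a) ≤ ∫ t in a..b, fderiv ℝ Ψ (x t) (v t) := by
  rcases eq_or_lt_of_le hab with rfl | hab'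
  · simp
  set q : ℝ → ℝ := fun t => fderiv ℝ Ψ (x t) (v t) with hq
  -- compact sets and bounds
  set S₁ := x '' Icc a b with hS₁def
  have hS₁ : IsCompact S₁ := isCompact_Icc.image_of_continuousOn hx_cont
  have hS₁X : S₁ ⊆ X := by rintro - ⟨t, ht, rfl⟩; exact hxX t ht
  obtain ⟨M, hM, hMb⟩ := kras_bound hV hXV hΨ hg hgrad hS₁ hS₁X
  have hvM : ∀ᵐ t ∂(volume.restrict (Icc a b)), ‖v t‖ ≤ M := by
    filter_upwards [hvK, ae_restrict_mem measurableSet_Icc] with t hv ht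
    exact hMb (x t) ⟨t, ht, rfl⟩ _ hv
  have hDcont : ContinuousOn (fderiv ℝ Ψ) V := hΨ.continuousOn_fderiv_of_isOpen hV le_rfl
  obtain ⟨r, hr, hrV⟩ := hS₁.exists_cthickening_subset_open hV (hS₁X.trans hXV)
  set S₂ := Metric.cthickening r S₁ with hS₂def
  have hS₂ : IsCompact S₂ := hS₁.cthickening
  have hS₁S₂ : S₁ ⊆ S₂ := Metric.self_subset_cthickening _
  obtain ⟨C, hC⟩ := hS₂.exists_bound_of_continuousOn (hDcont.mono hrV)
  -- measurability and integrability of q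
  have hmapsTo : MapsTo x (Icc a b) V := fun t ht => hXV (hxX t ht)
  have hΦc : ContinuousOn (fun t => fderiv ℝ Ψ (x t)) (Icc a b) :=
    hDcont.comp hx_cont hmapsTo
  have hΦm : AEStronglyMeasurable (fun t => fderiv ℝ Ψ (x t)) (volume.restrict (Icc a b)) :=
    hΦc.aestronglyMeasurable measurableSet_Icc
  have hvm : AEStronglyMeasurable v (volume.restrict (Icc a b)) :=
    hv_int.aestronglyMeasurable
  have hqm : AEStronglyMeasurable q (volume.restrict (Icc a b)) :=
    isBoundedBilinearMap_apply.continuous.comp_aestronglyMeasurable (hΦm.prodMk hvm)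
  have hq_int : IntegrableOn q (Icc a b) volume := by
    refine Integrable.mono' ((hv_int.norm).const_mul C) hqm ?_
    filter_upwards [ae_restrict_mem measurableSet_Icc] with t ht
    calc ‖q t‖ ≤ ‖fderiv ℝ Ψ (x t)‖ * ‖v t‖ := (fderiv ℝ Ψ (x t)).le_opNorm _
      _ ≤ C * ‖v t‖ := by
          exact mul_le_mul_of_nonneg_right (hC (x t) (hS₁S₂ ⟨t, ht, rfl⟩)) (norm_nonneg _)
  -- interval integrability on subintervals
  have hIq : ∀ s ∈ Icc a b, ∀ t ∈ Icc a b, IntervalIntegrable q volume s t := by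
    intro s hs t ht
    exact (hq_int.mono_set (uIcc_subset_Icc hs ht)).intervalIntegrable
  have hIv : ∀ s ∈ Icc a b, ∀ t ∈ Icc a b, IntervalIntegrable v volume s t := by
    intro s hs t ht
    exact (hv_int.mono_set (uIcc_subset_Icc hs ht)).intervalIntegrable
  -- Lipschitz bound for x
  have hvM' : ∀ᵐ t ∂volume, t ∈ Icc a b → ‖v t‖ ≤ M :=
    (ae_restrict_iff' measurableSet_Icc).mp hvM
  have hLip : ∀ s ∈ Icc a b, ∀ t ∈ Icc a b, ‖x t - x s‖ ≤ M * |t - s| := by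
    intro s hs t ht
    have hxts : x t - x s = ∫ r in s..t, v r := by
      rw [hint s hs t ht]; abel
    rw [hxts]
    refine intervalIntegral.norm_integral_le_of_norm_le_const_ae ?_
    filter_upwards [hvM'] with r hr hrmem
    exact hr ((Ioc_subset_Icc_self.trans (uIcc_subset_Icc hs ht)) hrmem)
  -- the key slope estimate
  have hslope : ∀ η > (0:ℝ), ∃ ε₀ > (0:ℝ), ∀ t ∈ Ico a b, ∀ z ∈ Ioc t b,
      z - t ≤ ε₀ → Ψ (x z) - Ψ (x t) ≤ (∫ r in t..z, q r) + η * (z - t) := by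
    intro η hη
    set η1 := η / (2 * (M + 1)) with hη1def
    have hη1 : 0 < η1 := by positivity
    obtain ⟨δ, hδ, hδp⟩ := Metric.uniformContinuousOn_iff.mp
      (hS₂.uniformContinuousOn_of_continuous (hDcont.mono hrV)) η1 hη1
    refine ⟨min (δ / (2 * (M + 1))) (r / (M + 1)), by positivity, ?_⟩
    intro t ht z hz hzε
    set ε := z - t with hεdef
    have hε : 0 < ε := by simp only [hεdef]; linarith [hz.1]
    have htI : t ∈ Icc a b := Ico_subset_Icc_self ht
    have hzI : z ∈ Icc a b := ⟨ht.1.trans hz.1.le, hz.2⟩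
    have hMε1 : M * ε < δ := by
      have h1 : ε * (2 * (M + 1)) ≤ δ :=
        (le_div_iff₀ (by positivity)).mp (hzε.trans (min_le_left _ _))
      nlinarith [mul_pos hM hε]
    have hMε2 : M * ε ≤ r := by
      have h1 : ε * (M + 1) ≤ r :=
        (le_div_iff₀ (by positivity)).mp (hzε.trans (min_le_right _ _))
      nlinarith []
    have hball : Metric.closedBall (x t) (M * ε) ⊆ S₂ := by
      refine (Metric.closedBall_subset_cthickening (E := S₁) ⟨t, htI, rfl⟩ (M * ε)).trans ?_
      exact Metric.cthickening_mono hMε2 _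
    have hxs_ball : ∀ s ∈ Icc t z, x s ∈ Metric.closedBall (x t) (M * ε) := by
      intro s hs
      have hsI : s ∈ Icc a b := ⟨htI.1.trans hs.1, hs.2.trans hzI.2⟩
      rw [Metric.mem_closedBall, dist_eq_norm]
      refine (hLip t htI s hsI).trans ?_
      have : |s - t| ≤ ε := by rw [abs_of_nonneg (by linarith [hs.1])]; linarith [hs.2]
      exact mul_le_mul_of_nonneg_left this hM.le
    set L := fderiv ℝ Ψ (x t) with hLdef
    -- Taylor-type estimate via the mean value inequality
    have hTay : ‖Ψ (x z) - Ψ (x t) - L (x z - x t)‖ ≤ η1 * ‖x z - x t‖ := by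
      have hconv : Convex ℝ (Metric.closedBall (x t) (M * ε)) := convex_closedBall _ _
      have hder : ∀ y ∈ Metric.closedBall (x t) (M * ε),
          HasFDerivWithinAt (fun y => Ψ y - L y) (fderiv ℝ Ψ y - L)
            (Metric.closedBall (x t) (M * ε)) y := by
        intro y hy
        have hyV : y ∈ V := hrV (hball hy)
        have hdΨ : HasFDerivAt Ψ (fderiv ℝ Ψ y) y :=
          ((hΨ.differentiableOn one_ne_zero).differentiableAt (hV.mem_nhds hyV)).hasFDerivAt
        exact (hdΨ.sub (L.hasFDerivAt)).hasFDerivWithinAt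
      have hbound : ∀ y ∈ Metric.closedBall (x t) (M * ε), ‖fderiv ℝ Ψ y - L‖ ≤ η1 := by
        intro y hy
        have h1 : dist (fderiv ℝ Ψ y) (fderiv ℝ Ψ (x t)) < η1 := by
          refine hδp y (hball hy) (x t) (hS₁S₂ ⟨t, htI, rfl⟩) ?_
          calc dist y (x t) ≤ M * ε := Metric.mem_closedBall.mp hy
            _ < δ := hMε1
        rw [dist_eq_norm] at h1
        exact h1.le
      have := hconv.norm_image_sub_le_of_norm_hasFDerivWithin_le hder hbound
        (Metric.mem_closedBall_self (by positivity))
        (hxs_ball z ⟨hz.1.le, le_rfl⟩)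
      calc ‖Ψ (x z) - Ψ (x t) - L (x z - x t)‖
          = ‖(Ψ (x z) - L (x z)) - (Ψ (x t) - L (x t))‖ := by
            rw [L.map_sub]; congr 1; ring
        _ ≤ η1 * ‖x z - x t‖ := this
    have hxzt : x z - x t = ∫ r in t..z, v r := by rw [hint t htI z hzI]; abel
    have hIvz : IntervalIntegrable v volume t z := hIv t htI z hzI
    have hInt1 : L (x z - x t) = ∫ r in t..z, L (v r) := by
      rw [hxzt, (L.intervalIntegral_comp_comm hIvz)]
    -- compare ∫ L(v) with ∫ q
    have hLv_int : IntegrableOn (fun s => L (v s)) (Icc a b) volume := by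
      refine Integrable.mono' ((hv_int.norm).const_mul ‖L‖)
        (L.continuous.comp_aestronglyMeasurable hvm) ?_
      refine Eventually.of_forall fun s => ?_
      exact (L.le_opNorm _)
    have hILv : IntervalIntegrable (fun s => L (v s)) volume t z :=
      (hLv_int.mono_set (uIcc_subset_Icc htI hzI)).intervalIntegrable
    have hIqz : IntervalIntegrable q volume t z := hIq t htI z hzI
    have hInt2 : (∫ r in t..z, L (v r)) - (∫ r in t..z, q r) ≤ η1 * M * ε := by
      rw [← intervalIntegral.integral_sub hILv hIqz]
      have hb : ‖∫ r in t..z, (L (v r) - q r)‖ ≤ η1 * M * |z - t| := by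
        refine intervalIntegral.norm_integral_le_of_norm_le_const_ae ?_
        filter_upwards [hvM'] with s hs hsmem
        have hsI' : s ∈ Icc t z := Ioc_subset_Icc_self (by
          rwa [uIoc_of_le hz.1.le] at hsmem)
        have hsI : s ∈ Icc a b := ⟨htI.1.trans hsI'.1, hsI'.2.trans hzI.2⟩
        have hvs : ‖v s‖ ≤ M := hs hsI
        have hLd : ‖L - fderiv ℝ Ψ (x s)‖ ≤ η1 := by
          have h1 : dist (fderiv ℝ Ψ (x t)) (fderiv ℝ Ψ (x s)) < η1 := by
            refine hδp (x t) (hS₁S₂ ⟨t, htI, rfl⟩) (x s) (hball (hxs_ball s hsI')) ?_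
            rw [dist_eq_norm]
            calc ‖x t - x s‖ = ‖x s - x t‖ := norm_sub_rev _ _
              _ ≤ M * ε := by
                  have := Metric.mem_closedBall.mp (hxs_ball s hsI')
                  rwa [dist_eq_norm] at this
              _ < δ := hMε1
          rw [dist_eq_norm] at h1
          exact h1.le
        calc ‖L (v s) - q s‖ = ‖(L - fderiv ℝ Ψ (x s)) (v s)‖ := by
              simp [hq, ContinuousLinearMap.sub_apply]
          _ ≤ ‖L - fderiv ℝ Ψ (x s)‖ * ‖v s‖ := (L - fderiv ℝ Ψ (x s)).le_opNorm _
          _ ≤ η1 * M := by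
              exact mul_le_mul hLd hvs (norm_nonneg _) hη1.le
      have habs : |z - t| = ε := abs_of_pos hε
      calc (∫ r in t..z, (L (v r) - q r)) ≤ ‖∫ r in t..z, (L (v r) - q r)‖ := le_abs_self _
        _ ≤ η1 * M * |z - t| := hb
        _ = η1 * M * ε := by rw [habs]
    -- combine
    have hTay' : Ψ (x z) - Ψ (x t) ≤ L (x z - x t) + η1 * ‖x z - x t‖ := by
      have := hTay
      rw [Real.norm_eq_abs] at this
      have h2 := le_abs_self (Ψ (x z) - Ψ (x t) - L (x z - x t))
      linarith
    have hnxzt : ‖x z - x t‖ ≤ M * ε := by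
      have := hLip t htI z hzI
      rwa [abs_of_pos hε] at this
    have h2η : η1 * M * ε + η1 * (M * ε) ≤ η * ε := by
      have h2' : η1 * (2 * (M + 1)) = η := by
        rw [hη1def]; field_simp
      nlinarith [hη1.le, hM.le, hε.le, mul_nonneg hη1.le hε.le,
        mul_nonneg (mul_nonneg hη1.le hM.le) hε.le]
    calc Ψ (x z) - Ψ (x t) ≤ L (x z - x t) + η1 * ‖x z - x t‖ := hTay'
      _ ≤ (∫ r in t..z, L (v r)) + η1 * (M * ε) := by
          rw [hInt1]
          exact add_le_add_right (mul_le_mul_of_nonneg_left hnxzt hη1.le) _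
      _ ≤ (∫ r in t..z, q r) + η1 * M * ε + η1 * (M * ε) := by linarith
      _ ≤ (∫ r in t..z, q r) + η * (z - t) := by
          have := h2η; simp only [hεdef] at *; linarith
  -- Dini-derivative argument
  set G : ℝ → ℝ := fun t => ∫ r in a..t, q r with hGdef
  have hGcont : ContinuousOn G (Icc a b) := by
    have := intervalIntegral.continuousOn_primitive_interval
      (a := a) (b := b) (f := q) (μ := volume) (by rwa [uIcc_of_le hab])
    rwa [uIcc_of_le hab] at this
  set f : ℝ → ℝ := fun t => Ψ (x t) - G t with hfdef
  have hfc : ContinuousOn f (Icc a b) :=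
    ((hΨ.continuousOn).comp hx_cont hmapsTo).sub hGcont
  have hfinal : ∀ ε' > (0:ℝ), f b ≤ f a + ε' * (b - a) := by
    intro ε' hε'
    obtain ⟨ε₀, hε₀, hsl⟩ := hslope (ε'/2) (by positivity)
    have key := image_le_of_liminf_slope_right_lt_deriv_boundary (f := f)
      (f' := fun _ => ε'/2) (a := a) (b := b)
      (B := fun s => f a + ε' * (s - a)) (B' := fun _ => ε') hfc ?_ ?_ ?_ ?_
    · exact key (right_mem_Icc.mpr hab)
    · -- slope condition
      intro s hs ρ hρ
      have hIoo : Ioo s (min (s + ε₀) b) ∈ 𝓝[>] s :=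
        Ioo_mem_nhdsGT_of_mem ⟨le_rfl, lt_min (by linarith [hs.2]) hs.2⟩
      refine Filter.Eventually.frequently (Filter.eventually_of_mem hIoo fun z hz => ?_)
      have hzIoc : z ∈ Ioc s b := ⟨hz.1, (hz.2.trans_le (min_le_right _ _)).le⟩
      have hzs : z - s ≤ ε₀ := by
        have := hz.2.trans_le (min_le_left _ _); linarith
      have hzI : z ∈ Icc a b := ⟨hs.1.trans hz.1.le, hzIoc.2⟩
      have hest := hsl s hs z hzIoc hzs
      have hGz : G z - G s = ∫ r in s..z, q r := by
        simpa [hGdef] using intervalIntegral.integral_interval_sub_left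
          (hIq a (left_mem_Icc.mpr hab) z hzI)
          (hIq a (left_mem_Icc.mpr hab) s (Ico_subset_Icc_self hs))
      have hfz : f z - f s ≤ (ε'/2) * (z - s) := by
        simp only [hfdef]
        have : Ψ (x z) - Ψ (x s) - (G z - G s) ≤ ε'/2 * (z - s) := by
          rw [hGz]; linarith
        linarith
      rw [slope_def_field, div_lt_iff₀ (by linarith [hz.1] : (0:ℝ) < z - s)]
      have hρ' : (ε'/2) * (z - s) < ρ * (z - s) := by
        have h0 : (0:ℝ) < z - s := by linarith [hz.1]
        have hρ2 : ε'/2 < ρ := hρ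
        nlinarith
      exact lt_of_le_of_lt hfz hρ'
    · simp
    · intro s
      have h := (((hasDerivAt_id s).sub_const a).const_mul ε').const_add (f a)
      simpa using h
    · exact fun s _ _ => by linarith
  -- conclusion
  have hGa : G a = 0 := intervalIntegral.integral_same
  have hGb : G b = ∫ t in a..b, q t := rfl
  by_contra hcc
  push_neg at hcc
  have hba : 0 < b - a := by linarith
  have hDpos : 0 < Ψ (x b) - Ψ (x a) - G b := by rw [hGb]; linarith
  have h1 := hfinal ((Ψ (x b) - Ψ (x a) - G b) / (2 * (b - a)))
    (by positivity)
  simp only [hfdef] at h1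
  rw [hGa] at h1
  set D := Ψ (x b) - Ψ (x a) - G b with hDdef
  have h2 : D ≤ D / (2 * (b - a)) * (b - a) := by linarith
  rw [div_mul_eq_mul_div] at h2
  have h3 : D * (b - a) / (2 * (b - a)) = D / 2 := by
    field_simp
  rw [h3] at h2
  linarith

end KeyIneq
/-- convergence of projected gradient flows to weak equilibria (Proposition 5.3). -/
theorem stmt_5 {n : ℕ} (X : Set (Euc n)) (g : VarMetric n)
    (V : Set (Euc n)) (hV : IsOpen V) (hXV : X ⊆ V)
    (Ψ : Euc n → ℝ) (hΨ : ContDiffOn ℝ 1 Ψ V)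
    (hg : ContinuousOn g.B X)
    (hcompact : ∀ ℓ : ℝ, IsCompact ({y | Ψ y ≤ ℓ} ∩ X))
    (gradΨ : Euc n → Euc n)
    (hgrad : ∀ x ∈ X, ∀ w : Euc n, g.B x (gradΨ x) w = fderiv ℝ Ψ x w)
    (hext : ∀ x₀ ∈ X, ∀ T > (0:ℝ), ∀ x : ℝ → Euc n,
      IsSolOn X (kras X (projVF X g (fun y => -gradΨ y))) x₀ x (Set.Ico 0 T) →
      ∃ y : ℝ → Euc n,
        IsSolOn X (kras X (projVF X g (fun y => -gradΨ y))) x₀ y (Set.Ici 0) ∧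
        ∀ t ∈ Set.Ico (0:ℝ) T, y t = x t) :
    ∀ x₀ ∈ X, ∀ x : ℝ → Euc n,
      IsSolOn X (kras X (projVF X g (fun y => -gradΨ y))) x₀ x (Set.Ici 0) →
      Tendsto (fun t => Metric.infDist (x t)
          {z | z ∈ X ∧ (0 : Euc n) ∈ kras X (projVF X g (fun y => -gradΨ y)) z})
        atTop (𝓝 0) := by
  clear hext
  intro x₀ hx₀ x hsol
  obtain ⟨hx0, hxX, v, hvloc, hxint, hvK⟩ := hsol
  set E := {z | z ∈ X ∧ (0 : Euc n) ∈ kras X (projVF X g (fun y => -gradΨ y)) z} with hEdef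
  set q : ℝ → ℝ := fun t => fderiv ℝ Ψ (x t) (v t) with hqdef
  -- basic integrability facts
  have hvInt : ∀ b : ℝ, IntegrableOn v (Icc 0 b) volume := by
    intro b
    rcases le_or_gt 0 b with hb | hb
    · exact hvloc.integrableOn_compact_subset (Icc_subset_Ici_self) isCompact_Icc
    · rw [Icc_eq_empty (by linarith)]; exact integrableOn_empty
  have hIvst : ∀ s t : ℝ, 0 ≤ s → 0 ≤ t → IntervalIntegrable v volume s t := by
    intro s t hs ht
    refine ((hvInt (max s t)).mono_set ?_).intervalIntegrable
    exact uIcc_subset_Icc ⟨hs, le_max_left _ _⟩ ⟨ht, le_max_right _ _⟩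
  have hxst : ∀ s t : ℝ, 0 ≤ s → 0 ≤ t → x t = x s + ∫ r in s..t, v r := by
    intro s t hs ht
    have h1 := hxint t ht
    have h2 := hxint s hs
    have h3 := intervalIntegral.integral_interval_sub_left
      (hIvst 0 t le_rfl ht) (hIvst 0 s le_rfl hs)
    rw [h1, h2, ← h3]
    abel
  have hxcont : ∀ b : ℝ, ContinuousOn x (Icc 0 b) := by
    intro b
    rcases lt_or_ge b 0 with hb | hb
    · rw [Icc_eq_empty (by linarith)]
      exact continuousOn_empty x
    refine ContinuousOn.congr (f := fun t => x₀ + ∫ r in (0:ℝ)..t, v r) ?_ ?_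
    · refine continuousOn_const.add ?_
      have := intervalIntegral.continuousOn_primitive_interval
        (a := (0:ℝ)) (b := b) (f := v) (μ := volume) (by rw [uIcc_of_le hb]; exact hvInt b)
      rwa [uIcc_of_le hb] at this
    · intro t ht
      exact hxint t ht.1
  -- key inequality specialized
  have hkey : ∀ a b : ℝ, 0 ≤ a → a ≤ b →
      Ψ (x b) - Ψ (x a) ≤ ∫ t in a..b, q t := by
    intro a b ha hab
    refine key_ineq hV hXV hΨ hg hgrad hab
      ((hxcont b).mono (Icc_subset_Icc ha le_rfl))
      (fun t ht => hxX t (ha.trans ht.1)) ?_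
      ((hvInt b).mono_set (Icc_subset_Icc ha le_rfl)) ?_
    · intro s hs t ht
      exact hxst s t (ha.trans hs.1) (ha.trans ht.1)
    · exact ae_mono (Measure.restrict_mono (fun t ht => ha.trans ht.1) le_rfl) hvK
  -- q is nonpositive a.e.
  have hvK' : ∀ᵐ t ∂volume, t ∈ Ici (0:ℝ) →
      v t ∈ kras X (projVF X g (fun y => -gradΨ y)) (x t) :=
    (ae_restrict_iff' measurableSet_Ici).mp hvK
  have hq_nonpos : ∀ᵐ t ∂volume, t ∈ Ici (0:ℝ) → q t ≤ 0 := by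
    filter_upwards [hvK'] with t hv ht
    have h := kras_fderiv_le hV hXV hΨ hg hgrad (hxX t ht) (hv ht)
    have h2 := g.B_nonneg (x t) (v t)
    simp only [hqdef]
    linarith
  -- integrability of q on compacts
  have hq_int : ∀ b : ℝ, 0 ≤ b → IntegrableOn q (Icc 0 b) volume := by
    intro b hb
    have hx_cont := hxcont b
    set S₁ := x '' Icc 0 b with hS₁def
    have hS₁ : IsCompact S₁ := isCompact_Icc.image_of_continuousOn hx_cont
    have hS₁V : S₁ ⊆ V := by rintro - ⟨t, ht, rfl⟩; exact hXV (hxX t ht.1)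
    have hDcont : ContinuousOn (fderiv ℝ Ψ) V := hΨ.continuousOn_fderiv_of_isOpen hV le_rfl
    obtain ⟨C, hC⟩ := hS₁.exists_bound_of_continuousOn (hDcont.mono hS₁V)
    have hΦm : AEStronglyMeasurable (fun t => fderiv ℝ Ψ (x t))
        (volume.restrict (Icc 0 b)) :=
      (hDcont.comp hx_cont (fun t ht => hXV (hxX t ht.1))).aestronglyMeasurable
        measurableSet_Icc
    have hvm : AEStronglyMeasurable v (volume.restrict (Icc 0 b)) :=
      (hvInt b).aestronglyMeasurable
    have hqm : AEStronglyMeasurable q (volume.restrict (Icc 0 b)) :=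
      isBoundedBilinearMap_apply.continuous.comp_aestronglyMeasurable (hΦm.prodMk hvm)
    refine Integrable.mono' (((hvInt b).norm).const_mul C) hqm ?_
    filter_upwards [ae_restrict_mem measurableSet_Icc] with t ht
    calc ‖q t‖ ≤ ‖fderiv ℝ Ψ (x t)‖ * ‖v t‖ := (fderiv ℝ Ψ (x t)).le_opNorm _
      _ ≤ C * ‖v t‖ :=
          mul_le_mul_of_nonneg_right (hC (x t) ⟨t, ht, rfl⟩) (norm_nonneg _)
  have hIq : ∀ s t : ℝ, 0 ≤ s → 0 ≤ t → IntervalIntegrable q volume s t := by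
    intro s t hs ht
    refine ((hq_int (max s t) (hs.trans (le_max_left _ _))).mono_set ?_).intervalIntegrable
    exact uIcc_subset_Icc ⟨hs, le_max_left _ _⟩ ⟨ht, le_max_right _ _⟩
  -- monotonicity of Ψ along the solution
  have hmono : ∀ a b : ℝ, 0 ≤ a → a ≤ b → Ψ (x b) ≤ Ψ (x a) := by
    intro a b ha hab
    have h1 := hkey a b ha hab
    have h2 : (∫ t in a..b, q t) ≤ ∫ t in a..b, (0:ℝ) := by
      refine intervalIntegral.integral_mono_ae_restrict hab (hIq a b ha (ha.trans hab))
        intervalIntegrable_const ?_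
      refine ae_mono (Measure.restrict_mono
        (show Icc a b ⊆ Ici 0 from fun t ht => ha.trans ht.1) le_rfl) ?_
      exact (ae_restrict_iff' measurableSet_Ici).mpr hq_nonpos
    simp only [intervalIntegral.integral_zero] at h2
    linarith
  -- the trajectory stays in the compact sublevel set S
  set S := {y | Ψ y ≤ Ψ x₀} ∩ X with hSdef
  have hS : IsCompact S := hcompact (Ψ x₀)
  have hSX : S ⊆ X := inter_subset_right
  have hxS : ∀ t : ℝ, 0 ≤ t → x t ∈ S := by
    intro t ht
    refine ⟨?_, hxX t ht⟩
    have := hmono 0 t le_rfl ht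
    rw [hx0] at this
    exact this
  obtain ⟨M, hM, hMb⟩ := kras_bound hV hXV hΨ hg hgrad hS hSX
  -- Lipschitz bound along the trajectory
  have hvMae : ∀ᵐ r ∂volume, r ∈ Ici (0:ℝ) → ‖v r‖ ≤ M := by
    filter_upwards [hvK'] with r hv hr
    exact hMb (x r) (hxS r hr) _ (hv hr)
  have hLipx : ∀ s t : ℝ, 0 ≤ s → s ≤ t → ‖x t - x s‖ ≤ M * (t - s) := by
    intro s t hs hst
    have hxts : x t - x s = ∫ r in s..t, v r := by
      rw [hxst s t hs (hs.trans hst)]; abel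
    rw [hxts]
    have := intervalIntegral.norm_integral_le_of_norm_le_const_ae
      (C := M) (f := v) (a := s) (b := t) ?_
    · rwa [abs_of_nonneg (by linarith)] at this
    · filter_upwards [hvMae] with r hr hrmem
      rw [uIoc_of_le hst] at hrmem
      exact hr (hs.trans hrmem.1.le)
  -- suppose convergence fails
  by_contra hcon
  rw [Metric.tendsto_atTop] at hcon
  push_neg at hcon
  obtain ⟨ε, hε, hfreq⟩ := hcon
  have hfreq' : ∀ N : ℝ, ∃ t, N ≤ t ∧ 0 ≤ t ∧ ε ≤ Metric.infDist (x t) E := by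
    intro N
    obtain ⟨t, ht, hd⟩ := hfreq (max N 0)
    refine ⟨t, (le_max_left _ _).trans ht, (le_max_right _ _).trans ht, ?_⟩
    rw [Real.dist_eq, sub_zero, abs_of_nonneg Metric.infDist_nonneg] at hd
    exact hd
  -- the compact "bad" set
  set Kε := S ∩ {z | ε/2 ≤ Metric.infDist z E} with hKεdef
  have hKεc : IsCompact Kε :=
    hS.inter_right (isClosed_le continuous_const (Metric.continuous_infDist_pt E))
  have hKεX : Kε ⊆ X := fun z hz => hz.1.2
  have hKε0 : ∀ z ∈ Kε, (0:Euc n) ∉ kras X (projVF X g (fun y => -gradΨ y)) z := by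
    intro z hz h0
    have hzE : z ∈ E := ⟨hz.1.2, h0⟩
    have := hz.2
    rw [mem_setOf_eq, Metric.infDist_zero_of_mem hzE] at this
    linarith
  obtain ⟨d, hd, hdl⟩ := kras_norm_lower hV hXV hΨ hg hgrad hKεc hKεX hKε0
  obtain ⟨m, hm, hml⟩ := posdef_lower hg hS hSX
  set c := m * d^2 / 2 with hcdef
  have hc : 0 < c := by positivity
  -- quantitative decrease while in Kε
  have hdec : ∀ s t : ℝ, 0 ≤ s → s ≤ t → (∀ r ∈ Icc s t, x r ∈ Kε) →
      Ψ (x t) ≤ Ψ (x s) - c * (t - s) := by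
    intro s t hs hst hK
    have h1 := hkey s t hs hst
    have h2 : (∫ r in s..t, q r) ≤ ∫ r in s..t, (-c) := by
      refine intervalIntegral.integral_mono_ae_restrict hst (hIq s t hs (hs.trans hst))
        intervalIntegrable_const ?_
      have : ∀ᵐ r ∂volume.restrict (Icc s t),
          v r ∈ kras X (projVF X g (fun y => -gradΨ y)) (x r) :=
        ae_mono (Measure.restrict_mono (fun r hr => hs.trans hr.1) le_rfl) hvK
      filter_upwards [this, ae_restrict_mem measurableSet_Icc] with r hv hr
      have hfd := kras_fderiv_le hV hXV hΨ hg hgrad (hxX r (hs.trans hr.1)) hv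
      have hB := hml (x r) (hK r hr).1 (v r)
      have hn := hdl (x r) (hK r hr) (v r) hv
      have hdd : d^2 ≤ ‖v r‖^2 := pow_le_pow_left₀ hd.le hn 2
      have : m * d^2 ≤ g.B (x r) (v r) (v r) := by
        nlinarith [mul_le_mul_of_nonneg_left hdd hm.le]
      simp only [hqdef, hcdef]
      linarith
    rw [intervalIntegral.integral_const, smul_eq_mul] at h2
    have : Ψ (x t) - Ψ (x s) ≤ (t - s) * (-c) := le_trans h1 h2
    linarith
  -- time to cross
  set τ := min (ε / (2 * M)) 1 with hτdef
  have hτ : 0 < τ := lt_min (by positivity) one_pos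
  have hMτ : M * τ ≤ ε / 2 := by
    have h1 : τ ≤ ε / (2 * M) := min_le_left _ _
    have := mul_le_mul_of_nonneg_left h1 hM.le
    calc M * τ ≤ M * (ε / (2 * M)) := this
      _ = ε / 2 := by field_simp
  have hstay : ∀ t₀ : ℝ, 0 ≤ t₀ → ε ≤ Metric.infDist (x t₀) E →
      ∀ r ∈ Icc t₀ (t₀ + τ), x r ∈ Kε := by
    intro t₀ ht₀ hinf r hr
    have hr0 : 0 ≤ r := ht₀.trans hr.1
    refine ⟨hxS r hr0, ?_⟩
    rw [mem_setOf_eq]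
    have h1 : Metric.infDist (x t₀) E ≤ Metric.infDist (x r) E + dist (x t₀) (x r) :=
      Metric.infDist_le_infDist_add_dist
    have h2 : dist (x t₀) (x r) ≤ ε / 2 := by
      rw [dist_comm, dist_eq_norm]
      calc ‖x r - x t₀‖ ≤ M * (r - t₀) := hLipx t₀ r ht₀ hr.1
        _ ≤ M * τ := by
            refine mul_le_mul_of_nonneg_left ?_ hM.le
            linarith [hr.2]
        _ ≤ ε / 2 := hMτ
    linarith
  -- iterate the decrease
  have hind : ∀ k : ℕ, ∃ t : ℝ, 0 ≤ t ∧ Ψ (x t) ≤ Ψ x₀ - k * (c * τ) := by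
    intro k
    induction k with
    | zero => exact ⟨0, le_rfl, by rw [hx0]; simp⟩
    | succ k ih =>
      obtain ⟨t, ht0, hΨt⟩ := ih
      obtain ⟨t', htt', ht'0, hinf⟩ := hfreq' t
      have hdec' := hdec t' (t' + τ) ht'0 (by linarith)
        (hstay t' ht'0 hinf)
      have hmono' := hmono t t' ht0 htt'
      refine ⟨t' + τ, by linarith, ?_⟩
      push_cast
      have : c * (t' + τ - t') = c * τ := by ring_nf
      rw [this] at hdec'
      nlinarith
  -- lower bound for Ψ on S gives the contradiction
  have hSne : S.Nonempty := ⟨x 0, hxS 0 le_rfl⟩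
  obtain ⟨y₀, hy₀, hminΨ⟩ := hS.exists_isMinOn hSne
    (hΨ.continuousOn.mono (hSX.trans hXV))
  have hminΨ' := isMinOn_iff.mp hminΨ
  obtain ⟨k, hk⟩ := exists_nat_gt ((Ψ x₀ - Ψ y₀) / (c * τ))
  obtain ⟨t, ht0, hΨt⟩ := hind k
  have hlow : Ψ y₀ ≤ Ψ (x t) := hminΨ' (x t) (hxS t ht0)
  have hcτ : 0 < c * τ := by positivity
  rw [div_lt_iff₀ hcτ] at hk
  linarith
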